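/- New generalized Sylvester identity, odd case: for k odd with 0 ≤ k ≤ q, det(M_k) · (det M_0)^{(s-1)^k} = [Π over even i from 0 to k-1 of (det B_i)^{(s-1)^{k-1-i}}] / [Π over odd j from 1 to k-2 of (det B_j)^{(s-1)^{k-1-j}}]. -/

import Mathlib

/-!
Sylvester's identity says that the determinant of the `s × s` matrix of minors of order `a + 1`
obtained by bordering the leading `a × a` block is `det(M_{a+s}) · det(M_a)^(s-1)`; it follows
from the Schur complement, since each bordered minor is `det(M_a)` times an entry of the Schur
complement of `M_a` in `M_{a+s}`. With `a = t + j·s` this reads `B_j = det M_{j+1} · (det M_j)^(s-1)`,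
so `det M_j ≠ 0` propagates from `B_j ≠ 0`. Unrolling the recurrence gives
`det M_k = ∏_{i<k} B_i ^ (-(s-1))^(k-1-i) · (det M_0) ^ (-(s-1))^k`; for odd `k` the sign of the
exponent of `B_i` is that of `(-1)^i`, which splits the product by the parity of `i`.
-/

open Matrix Finset

namespace Matrix

variable {ι κ R : Type*} [Fintype ι] [DecidableEq ι] [CommRing R]

-- Entry `(i, j)` is the minor of `N` on the rows `ι ∪ {i}` and the columns `ι ∪ {j}`.
def borderedMinors (N : Matrix (ι ⊕ κ) (ι ⊕ κ) R) : Matrix κ κ R :=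
  of fun i j => (N.submatrix (Sum.map id fun _ : Unit => i) (Sum.map id fun _ : Unit => j)).det

theorem borderedMinors_eq_smul_schur (N : Matrix (ι ⊕ κ) (ι ⊕ κ) R) [Invertible N.toBlocks₁₁] :
    borderedMinors N =
      N.toBlocks₁₁.det • (N.toBlocks₂₂ - N.toBlocks₂₁ * ⅟N.toBlocks₁₁ * N.toBlocks₁₂) := by
  ext i j
  have hblocks : N.submatrix (Sum.map id fun _ : Unit => i) (Sum.map id fun _ : Unit => j) =
      fromBlocks N.toBlocks₁₁ (N.toBlocks₁₂.submatrix id fun _ => j)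
        (N.toBlocks₂₁.submatrix (fun _ => i) id) (of fun _ _ => N.toBlocks₂₂ i j) := by
    ext (_ | _) (_ | _) <;> rfl
  rw [borderedMinors, of_apply, hblocks, det_fromBlocks₁₁]
  simp [det_unique, Matrix.mul_apply]

theorem det_borderedMinors [Fintype κ] [DecidableEq κ] [Nonempty κ]
    (N : Matrix (ι ⊕ κ) (ι ⊕ κ) R) (h : IsUnit N.toBlocks₁₁.det) :
    (borderedMinors N).det = N.toBlocks₁₁.det ^ (Fintype.card κ - 1) * N.det := by
  have := N.toBlocks₁₁.invertibleOfIsUnitDet h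
  have hschur : N.det = N.toBlocks₁₁.det *
      (N.toBlocks₂₂ - N.toBlocks₂₁ * ⅟N.toBlocks₁₁ * N.toBlocks₁₂).det := by
    conv_lhs => rw [← fromBlocks_toBlocks N]
    exact det_fromBlocks₁₁ ..
  rw [borderedMinors_eq_smul_schur, det_smul, hschur, ← mul_assoc, ← pow_succ,
    Nat.sub_add_cancel Fintype.card_pos]

theorem det_leadingBorderedMinors {n m a s : ℕ} (M : Matrix (Fin n) (Fin m) R)
    (h1 : a + s ≤ n) (h2 : a + s ≤ m) (hs : 0 < s)
    (hA : IsUnit (M.submatrix (Fin.castLE (by omega : a ≤ n))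
      (Fin.castLE (by omega : a ≤ m))).det) :
    (of fun i j : Fin s =>
      (M.submatrix
        (Fin.snoc (Fin.castLE (by omega : a ≤ n))
          (⟨a + (i : ℕ), by have := i.isLt; omega⟩ : Fin n))
        (Fin.snoc (Fin.castLE (by omega : a ≤ m))
          (⟨a + (j : ℕ), by have := j.isLt; omega⟩ : Fin m))).det).det =
      (M.submatrix (Fin.castLE (by omega : a ≤ n)) (Fin.castLE (by omega : a ≤ m))).det ^ (s - 1) *
        (M.submatrix (Fin.castLE h1) (Fin.castLE h2)).det := by
  have : NeZero s := ⟨hs.ne'⟩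
  set N := (M.submatrix (Fin.castLE h1) (Fin.castLE h2)).submatrix finSumFinEquiv finSumFinEquiv
  have hbordered : borderedMinors N = of fun i j : Fin s =>
      (M.submatrix
        (Fin.snoc (Fin.castLE (by omega : a ≤ n))
          (⟨a + (i : ℕ), by have := i.isLt; omega⟩ : Fin n))
        (Fin.snoc (Fin.castLE (by omega : a ≤ m))
          (⟨a + (j : ℕ), by have := j.isLt; omega⟩ : Fin m))).det := by
    ext i j
    let e : Fin a ⊕ Unit ≃ Fin (a + 1) :=
      (Equiv.sumCongr (Equiv.refl _) finOneEquiv.symm).trans finSumFinEquiv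
    have hindex : ∀ (p : ℕ) (hp : a + s ≤ p) (i : Fin s) (x : Fin a ⊕ Unit),
        (Fin.snoc (Fin.castLE (by omega : a ≤ p))
          (⟨a + (i : ℕ), by have := i.isLt; omega⟩ : Fin p) : Fin (a + 1) → Fin p) (e x) =
        Fin.castLE hp (finSumFinEquiv (Sum.map id (fun _ => i) x)) := by
      rintro p hp i (x | _) <;> simp [e, Fin.snoc, Fin.ext_iff]
    rw [borderedMinors, of_apply, of_apply, ← det_submatrix_equiv_self e]
    congr 1
    ext x y
    exact congrArg₂ M (hindex n h1 i x).symm (hindex m h2 j y).symm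
  rw [← hbordered, det_borderedMinors N hA, Fintype.card_fin, det_submatrix_equiv_self]
  rfl

end Matrix

section FilterPowProd

variable {M : Type*} [CommMonoid M]

def filterPowProd (P : ℕ → Prop) [DecidablePred P] (b : ℕ → M) (e k : ℕ) : M :=
  ∏ i ∈ (range k).filter P, b i ^ e ^ (k - 1 - i)

theorem filterPowProd_zero (P : ℕ → Prop) [DecidablePred P] (b : ℕ → M) (e : ℕ) :
    filterPowProd P b e 0 = 1 := by
  simp [filterPowProd]

theorem filterPowProd_succ (P : ℕ → Prop) [DecidablePred P] (b : ℕ → M) (e k : ℕ) :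
    filterPowProd P b e (k + 1) = (if P k then b k else 1) * filterPowProd P b e k ^ e := by
  have hpow : ∀ i ∈ (range k).filter P,
      b i ^ e ^ (k + 1 - 1 - i) = (b i ^ e ^ (k - 1 - i)) ^ e := by
    intro i hi
    rw [← pow_mul, ← pow_succ]
    congr 2
    have := mem_range.mp (mem_filter.mp hi).1
    omega
  rw [filterPowProd, filterPowProd, range_add_one, filter_insert, ← prod_pow,
    ← prod_congr rfl hpow]
  split_ifs
  · rw [prod_insert (by simp)]
    simp
  · rw [one_mul]

theorem filterPowProd_even_odd_of_recurrence {x b : ℕ → M} {e q : ℕ}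
    (h : ∀ j < q, b j = x (j + 1) * x j ^ e) {k : ℕ} (hk : k ≤ q) :
    (Even k → x k * filterPowProd Even b e k = x 0 ^ e ^ k * filterPowProd Odd b e k) ∧
      (Odd k → x k * x 0 ^ e ^ k * filterPowProd Odd b e k = filterPowProd Even b e k) := by
  induction k with
  | zero => simp [filterPowProd_zero]
  | succ j ih =>
    obtain ⟨ih_even, ih_odd⟩ := ih (by omega)
    simp only [filterPowProd_succ, h j (by omega)]
    rcases Nat.even_or_odd j with hj | hj
    · have key := congrArg (· ^ e) (ih_even hj)
      simp only [mul_pow, ← pow_mul, ← pow_succ] at key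
      refine ⟨fun hj' => absurd hj' (Nat.not_even_iff_odd.mpr hj.add_one), fun _ => ?_⟩
      rw [if_pos hj, if_neg (Nat.not_odd_iff_even.mpr hj), one_mul]
      simp only [mul_assoc]
      rw [key]
    · have key := congrArg (· ^ e) (ih_odd hj)
      simp only [mul_pow, ← pow_mul, ← pow_succ] at key
      refine ⟨fun _ => ?_, fun hj' => absurd hj' (Nat.not_odd_iff_even.mpr hj.add_one)⟩
      rw [if_neg (Nat.not_even_iff_odd.mpr hj), if_pos hj, one_mul, ← key]
      ac_rfl

end FilterPowProd

theorem ne_zero_of_recurrence {M₀ : Type*} [MonoidWithZero M₀] {x b : ℕ → M₀} {e q : ℕ}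
    (h : ∀ j < q, x j ≠ 0 → b j = x (j + 1) * x j ^ e) (hx : x 0 ≠ 0) (hb : ∀ j < q, b j ≠ 0) :
    ∀ j ≤ q, x j ≠ 0 := by
  intro j hj
  induction j with
  | zero => exact hx
  | succ j ih =>
    intro h0
    apply hb j hj
    rw [h j hj (ih (by omega)), h0, zero_mul]

theorem filter_odd_range_sub_one {k : ℕ} (hk : Odd k) :
    (range (k - 1)).filter Odd = (range k).filter Odd := by
  obtain ⟨k, rfl⟩ := hk
  rw [Nat.add_sub_cancel, range_add_one, filter_insert, if_neg (by simp)]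

/-- New generalized Sylvester identity, odd case.  Here `Mk k` denotes the
determinant of the leading principal submatrix of `M` of order `t + k·s`, and
`B k` the determinant of the `s×s` matrix of bordered minors of orders
`t + k·s + 1` (rows `1,…,t+ks,t+ks+i`, columns `1,…,t+ks,t+ks+j`).  The
relevant determinants appearing in denominators are assumed nonzero. -/
theorem new_sylvester_odd {K : Type*} [Field K] {n m t s q : ℕ}
    (M : Matrix (Fin n) (Fin m) K)
    (hs1 : 1 ≤ s)
    (hr : min n m = t + q * s)
    (Mk B : ℕ → K)
    (hMk : ∀ k, k ≤ q → ∀ (h1 : t + k * s ≤ n) (h2 : t + k * s ≤ m),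
      Mk k = (M.submatrix (Fin.castLE h1) (Fin.castLE h2)).det)
    (hB : ∀ k, k < q → ∀ (h1 : t + k * s + s ≤ n) (h2 : t + k * s + s ≤ m),
      B k = (Matrix.of (fun i j : Fin s =>
        (M.submatrix
          (Fin.snoc (Fin.castLE (by omega : t + k * s ≤ n))
            (⟨t + k * s + (i : ℕ), by have := i.isLt; omega⟩ : Fin n))
          (Fin.snoc (Fin.castLE (by omega : t + k * s ≤ m))
            (⟨t + k * s + (j : ℕ), by have := j.isLt; omega⟩ : Fin m))).det)).det)
    (hM0 : Mk 0 ≠ 0) (hBne : ∀ k, k < q → B k ≠ 0)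
    (k : ℕ) (hk : k ≤ q) (hko : Odd k) :
    Mk k * (Mk 0) ^ ((s - 1) ^ k) =
      (∏ i ∈ (Finset.range k).filter (fun i => Even i), (B i) ^ ((s - 1) ^ (k - 1 - i))) /
      (∏ j ∈ (Finset.range (k - 1)).filter (fun j => Odd j), (B j) ^ ((s - 1) ^ (k - 1 - j))) := by
  have hsize : ∀ j < q, t + j * s + s ≤ n ∧ t + j * s + s ≤ m := fun j hj => by
    have : (j + 1) * s ≤ q * s := Nat.mul_le_mul_right s hj
    exact le_min_iff.mp (by rw [hr]; linarith [add_one_mul j s])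
  have hMk_of_eq : ∀ j ≤ q, ∀ a (h1 : a ≤ n) (h2 : a ≤ m), a = t + j * s →
      Mk j = (M.submatrix (Fin.castLE h1) (Fin.castLE h2)).det := by
    rintro j hj a h1 h2 rfl
    exact hMk j hj h1 h2
  have hrec : ∀ j < q, Mk j ≠ 0 → B j = Mk (j + 1) * Mk j ^ (s - 1) := by
    intro j hj hMj
    obtain ⟨h1, h2⟩ := hsize j hj
    rw [hMk_of_eq j hj.le _ (by omega) (by omega) rfl] at hMj ⊢
    rw [hB j hj h1 h2, hMk_of_eq (j + 1) hj _ h1 h2 (by ring)]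
    exact (det_leadingBorderedMinors M h1 h2 hs1 hMj.isUnit).trans (mul_comm _ _)
  have hMk_ne := ne_zero_of_recurrence hrec hM0 hBne
  have key := (filterPowProd_even_odd_of_recurrence
    (fun j hj => hrec j hj (hMk_ne j hj.le)) hk).2 hko
  have hO : filterPowProd Odd B (s - 1) k ≠ 0 :=
    prod_ne_zero_iff.mpr fun i hi =>
      pow_ne_zero _ (hBne i (by have := mem_range.mp (mem_filter.mp hi).1; omega))
  rw [filter_odd_range_sub_one hko]
  exact (eq_div_iff hO).mpr key
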